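/- Entanglement-witness bound on product states: Let {A_i}_{i=1}^r be matrices on ℂ^{d_A} and {B_i}_{i=1}^r matrices on ℂ^{d_B}, each family orthonormal with respect to the Hilbert–Schmidt inner product (Tr(A_iᴴ A_j) = δ_{ij} and Tr(B_iᴴ B_j) = δ_{ij}). Then for all unit vectors a ∈ ℂ^{d_A} and b ∈ ℂ^{d_B}, one has |Σ_{i=1}^r ⟨a, A_i a⟩ ⟨b, B_i b⟩| ≤ 1. -/

import Mathlib

open Matrix Kronecker ComplexOrder

/-- Trace norm `‖X‖_tr = Tr √(X Xᴴ)`. -/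
noncomputable def traceNorm {m n : Type*} [Fintype m] [Fintype n] [DecidableEq m]
    (X : Matrix m n ℂ) : ℝ :=
  (((Matrix.posSemidef_self_mul_conjTranspose X).1.eigenvectorUnitary.1 *
      diagonal (((↑) : ℝ → ℂ) ∘ (Real.sqrt ∘ (Matrix.posSemidef_self_mul_conjTranspose X).1.eigenvalues)) *
      (star (Matrix.posSemidef_self_mul_conjTranspose X).1.eigenvectorUnitary : Matrix m m ℂ)).trace).re

/-- A density matrix: positive semidefinite with trace 1. -/
def IsDensityMatrix {n : Type*} [Fintype n] (ρ : Matrix n n ℂ) : Prop :=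
  ρ.PosSemidef ∧ ρ.trace = 1

/-- The realignment map: `R(ρ)_{(i,j),(k,l)} = ρ_{(i,k),(j,l)}`. -/
def realign {dA dB : ℕ} (ρ : Matrix (Fin dA × Fin dB) (Fin dA × Fin dB) ℂ) :
    Matrix (Fin dA × Fin dA) (Fin dB × Fin dB) ℂ :=
  fun p q => ρ (p.1, q.1) (p.2, q.2)

/-- Partial transpose on the second subsystem: `(ρ^{T₂})_{(i,k),(j,l)} = ρ_{(i,l),(j,k)}`. -/
def ptranspose2 {d : ℕ} (ρ : Matrix (Fin d × Fin d) (Fin d × Fin d) ℂ) :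
    Matrix (Fin d × Fin d) (Fin d × Fin d) ℂ :=
  fun p q => ρ (p.1, q.2) (q.1, p.2)

/-- The swap (exchange) operator `F_{(i,k),(j,l)} = δ_{il} δ_{kj}`. -/
def swapOp (d : ℕ) : Matrix (Fin d × Fin d) (Fin d × Fin d) ℂ :=
  fun p q => if p.1 = q.2 ∧ p.2 = q.1 then 1 else 0

/-- The unnormalized maximally entangled projector `(|Ω⟩⟨Ω|)_{(i,k),(j,l)} = δ_{ik} δ_{jl}`. -/
def omegaProj (d : ℕ) : Matrix (Fin d × Fin d) (Fin d × Fin d) ℂ :=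
  fun p q => if p.1 = p.2 ∧ q.1 = q.2 then 1 else 0

/-- Separability: `ρ` is a finite convex combination of products of density matrices. -/
def IsSeparableState {dA dB : ℕ} (ρ : Matrix (Fin dA × Fin dB) (Fin dA × Fin dB) ℂ) : Prop :=
  ∃ (m : ℕ) (p : Fin m → ℝ) (σ : Fin m → Matrix (Fin dA) (Fin dA) ℂ)
    (τ : Fin m → Matrix (Fin dB) (Fin dB) ℂ),
    (∀ k, 0 ≤ p k) ∧ (∑ k, p k = 1) ∧ (∀ k, IsDensityMatrix (σ k)) ∧
    (∀ k, IsDensityMatrix (τ k)) ∧ ρ = ∑ k, (p k : ℂ) • (σ k ⊗ₖ τ k)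

/-!
For the Hilbert–Schmidt inner product, `⟨a, X a⟩ = ⟪a aᴴ, X⟫` and `‖a aᴴ‖ = ‖a‖²`, so Bessel's
inequality for the orthonormal family `A i` gives `∑ i, |⟨a, A i a⟩|² ≤ ‖a‖⁴`; likewise for `B`
and `b`, and the Cauchy–Schwarz inequality in the index `i` bounds the sum by `‖a‖² ‖b‖²`.
-/

theorem norm_sum_mul_le_sqrt_mul_sqrt {ι R : Type*} [SeminormedRing R] (s : Finset ι)
    (x y : ι → R) :
    ‖∑ i ∈ s, x i * y i‖ ≤ √(∑ i ∈ s, ‖x i‖ ^ 2) * √(∑ i ∈ s, ‖y i‖ ^ 2) :=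
  calc ‖∑ i ∈ s, x i * y i‖ ≤ ∑ i ∈ s, ‖x i‖ * ‖y i‖ :=
        (norm_sum_le _ _).trans (Finset.sum_le_sum fun _ _ => norm_mul_le _ _)
    _ ≤ _ := Real.sum_mul_le_sqrt_mul_sqrt _ _ _

section HilbertSchmidt

variable {𝕜 m n ι : Type*} [RCLike 𝕜] [Fintype ι] [DecidableEq ι]

theorem sum_sq_norm_star_dotProduct_mulVec_le [Fintype n] [DecidableEq n]
    (A : ι → Matrix n n 𝕜) (hA : ∀ i j, ((A i)ᴴ * A j).trace = if i = j then 1 else 0)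
    (a : n → 𝕜) :
    ∑ i, ‖star a ⬝ᵥ (A i *ᵥ a)‖ ^ 2 ≤ (∑ k, ‖a k‖ ^ 2) ^ 2 := by
  -- Mathlib's inner product `⟪X, Y⟫ = (Y * M * Xᴴ).trace` with `M = 1` is the Hilbert–Schmidt one.
  let _ := toMatrixSeminormedAddCommGroup (1 : Matrix n n 𝕜) PosSemidef.one
  let _ := toMatrixInnerProductSpace (1 : Matrix n n 𝕜) PosSemidef.one
  have inner_eq (X Y : Matrix n n 𝕜) : inner 𝕜 X Y = (Xᴴ * Y).trace := by
    rw [trace_mul_comm]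
    exact congrArg trace (congrArg (· * Xᴴ) (mul_one Y))
  have hAon : Orthonormal 𝕜 A := orthonormal_iff_ite.2 fun i j => by rw [inner_eq, hA]
  set P := vecMulVec a (star a)
  have inner_P (X : Matrix n n 𝕜) : star a ⬝ᵥ (X *ᵥ a) = inner 𝕜 P X := by
    rw [inner_eq, conjTranspose_vecMulVec, star_star, vecMulVec_mul, trace_vecMulVec,
      dotProduct_mulVec, dotProduct_comm]
  have star_dotProduct_self : star a ⬝ᵥ a = ((∑ k, ‖a k‖ ^ 2 : ℝ) : 𝕜) := by
    simp [dotProduct, RCLike.conj_mul]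
  have norm_P : ‖P‖ ^ 2 = (∑ k, ‖a k‖ ^ 2) ^ 2 := by
    rw [@norm_sq_eq_re_inner 𝕜, ← inner_P, vecMulVec_mulVec, dotProduct_smul,
      star_dotProduct_self, op_smul_eq_mul, ← RCLike.ofReal_mul, RCLike.ofReal_re, sq]
  calc ∑ i, ‖star a ⬝ᵥ (A i *ᵥ a)‖ ^ 2 = ∑ i, ‖inner 𝕜 (A i) P‖ ^ 2 := by
        simp_rw [inner_P, norm_inner_symm]
    _ ≤ ‖P‖ ^ 2 := hAon.sum_inner_products_le P
    _ = _ := norm_P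

theorem norm_sum_star_dotProduct_mulVec_mul_le [Fintype m] [DecidableEq m] [Fintype n]
    [DecidableEq n] (A : ι → Matrix m m 𝕜) (B : ι → Matrix n n 𝕜)
    (hA : ∀ i j, ((A i)ᴴ * A j).trace = if i = j then 1 else 0)
    (hB : ∀ i j, ((B i)ᴴ * B j).trace = if i = j then 1 else 0) (a : m → 𝕜) (b : n → 𝕜) :
    ‖∑ i, (star a ⬝ᵥ (A i *ᵥ a)) * (star b ⬝ᵥ (B i *ᵥ b))‖ ≤
      (∑ k, ‖a k‖ ^ 2) * ∑ k, ‖b k‖ ^ 2 :=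
  calc _ ≤ √(∑ i, ‖star a ⬝ᵥ (A i *ᵥ a)‖ ^ 2) * √(∑ i, ‖star b ⬝ᵥ (B i *ᵥ b)‖ ^ 2) :=
        norm_sum_mul_le_sqrt_mul_sqrt _ _ _
    _ ≤ √((∑ k, ‖a k‖ ^ 2) ^ 2) * √((∑ k, ‖b k‖ ^ 2) ^ 2) := by
        gcongr
        · exact sum_sq_norm_star_dotProduct_mulVec_le A hA a
        · exact sum_sq_norm_star_dotProduct_mulVec_le B hB b
    _ = _ := by rw [Real.sqrt_sq (by positivity), Real.sqrt_sq (by positivity)]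

end HilbertSchmidt

/-- **Entanglement-witness bound on product states.** For orthonormal families `{A_i}`,
`{B_i}` and unit vectors `a`, `b`, one has `|Σ_i ⟨a, A_i a⟩ ⟨b, B_i b⟩| ≤ 1`. -/
theorem witness_bound_on_product_states {dA dB r : ℕ}
    (A : Fin r → Matrix (Fin dA) (Fin dA) ℂ)
    (B : Fin r → Matrix (Fin dB) (Fin dB) ℂ)
    (hA : ∀ i j, ((A i)ᴴ * A j).trace = if i = j then 1 else 0)
    (hB : ∀ i j, ((B i)ᴴ * B j).trace = if i = j then 1 else 0)
    (a : Fin dA → ℂ) (b : Fin dB → ℂ)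
    (ha : ∑ i, ‖a i‖ ^ 2 = 1) (hb : ∑ i, ‖b i‖ ^ 2 = 1) :
    ‖∑ i, (star a ⬝ᵥ (A i *ᵥ a)) * (star b ⬝ᵥ (B i *ᵥ b))‖ ≤ 1 := by
  simpa [ha, hb] using norm_sum_star_dotProduct_mulVec_mul_le A B hA hB a b
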